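/- If φ ∈ 𝒜^m(Γ) and ψ ∈ 𝒜^n(Γ) with m + n ≥ 1, then the pointwise product φ·ψ ∈ 𝒜^{m+n−1}(Γ). -/
import Mathlib


open scoped MatrixGroups

/-- The spaces `𝒜^n(Γ)` of `n`-th order automorphic forms on the upper half-plane:
`𝒜^0(Γ)` contains only the zero function, and `ψ ∈ 𝒜^{n+1}(Γ)` iff for every `γ ∈ Γ`
the function `z ↦ ψ(γz) - ψ(z)` lies in `𝒜^n(Γ)`. -/
def autOrder (Γ : Subgroup SL(2, ℝ)) : ℕ → Set (UpperHalfPlane → ℂ)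
  | 0 => {ψ | ψ = fun _ => 0}
  | n + 1 => {ψ | ∀ γ ∈ Γ, (fun z => ψ (γ • z) - ψ z) ∈ autOrder Γ n}

lemma zero_mem_autOrder (Γ : Subgroup SL(2, ℝ)) :
    ∀ k, (fun _ : UpperHalfPlane => (0 : ℂ)) ∈ autOrder Γ k
  | 0 => rfl
  | k + 1 => by
      intro γ hγ
      simpa using zero_mem_autOrder Γ k

lemma add_mem_autOrder (Γ : Subgroup SL(2, ℝ)) :
    ∀ k (f g : UpperHalfPlane → ℂ), f ∈ autOrder Γ k → g ∈ autOrder Γ k →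
      (fun z => f z + g z) ∈ autOrder Γ k
  | 0, f, g, hf, hg => by
      have hf' : f = fun _ => 0 := hf
      have hg' : g = fun _ => 0 := hg
      show (fun z => f z + g z) = fun _ => 0
      funext z; simp [hf', hg']
  | k + 1, f, g, hf, hg => by
      intro γ hγ
      have := add_mem_autOrder Γ k _ _ (hf γ hγ) (hg γ hγ)
      have he : (fun z => (f (γ • z) - f z) + (g (γ • z) - g z))
          = fun z => (f (γ • z) + g (γ • z)) - (f z + g z) := by
        funext z; ring
      rw [he] at this
      exact this

lemma comp_mem_autOrder (Γ : Subgroup SL(2, ℝ)) :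
    ∀ k (f : UpperHalfPlane → ℂ) (γ : SL(2, ℝ)), γ ∈ Γ → f ∈ autOrder Γ k →
      (fun z => f (γ • z)) ∈ autOrder Γ k
  | 0, f, γ, hγ, hf => by
      have hf' : f = fun _ => 0 := hf
      show (fun z => f (γ • z)) = fun _ => 0
      funext z; simp [hf']
  | k + 1, f, γ, hγ, hf => by
      intro δ hδ
      have hmem : γ * δ * γ⁻¹ ∈ Γ := mul_mem (mul_mem hγ hδ) (inv_mem hγ)
      have h1 := hf (γ * δ * γ⁻¹) hmem
      have h2 := comp_mem_autOrder Γ k _ γ hγ h1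
      have he : (fun z : UpperHalfPlane => f ((γ * δ * γ⁻¹) • γ • z) - f (γ • z))
          = fun z => f (γ • δ • z) - f (γ • z) := by
        funext z
        congr 2
        rw [smul_smul, smul_smul]
        congr 1
        group
      rw [he] at h2
      exact h2

lemma mul_mem_autOrder (Γ : Subgroup SL(2, ℝ)) :
    ∀ N m n, m + n = N → ∀ φ ψ : UpperHalfPlane → ℂ,
      φ ∈ autOrder Γ m → ψ ∈ autOrder Γ n →
      (fun z => φ z * ψ z) ∈ autOrder Γ (m + n - 1) := by
  intro N
  induction N using Nat.strong_induction_on with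
  | _ N ih =>
    intro m n hN φ ψ hφ hψ
    match m, n with
    | 0, n =>
      have hφ' : φ = fun _ => 0 := hφ
      have h : (fun z => φ z * ψ z) = fun _ => 0 := by funext z; simp [hφ']
      rw [h]; exact zero_mem_autOrder Γ _
    | m, 0 =>
      have hψ' : ψ = fun _ => 0 := hψ
      have h : (fun z => φ z * ψ z) = fun _ => 0 := by funext z; simp [hψ']
      rw [h]; exact zero_mem_autOrder Γ _
    | m + 1, n + 1 =>
      have hidx : (m + 1) + (n + 1) - 1 = (m + n + 1) := by omega
      rw [hidx]
      intro γ hγ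
      -- Δφ ∈ 𝒜^m, ψ∘γ ∈ 𝒜^{n+1}
      have h1 : (fun z => φ (γ • z) - φ z) ∈ autOrder Γ m := hφ γ hγ
      have h2 : (fun z => ψ (γ • z)) ∈ autOrder Γ (n + 1) :=
        comp_mem_autOrder Γ (n + 1) ψ γ hγ hψ
      have p1 := ih (m + (n + 1)) (by omega) m (n + 1) rfl _ _ h1 h2
      have h3 : (fun z => ψ (γ • z) - ψ z) ∈ autOrder Γ n := hψ γ hγ
      have p2 := ih ((m + 1) + n) (by omega) (m + 1) n rfl _ _ hφ h3
      have e1 : m + (n + 1) - 1 = m + n := by omega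
      have e2 : (m + 1) + n - 1 = m + n := by omega
      rw [e1] at p1
      rw [e2] at p2
      have := add_mem_autOrder Γ (m + n) _ _ p1 p2
      have he : (fun z => ((φ (γ • z) - φ z) * ψ (γ • z)) + (φ z * (ψ (γ • z) - ψ z)))
          = fun z => φ (γ • z) * ψ (γ • z) - φ z * ψ z := by
        funext z; ring
      rw [he] at this
      exact this

theorem stmt_16 (Γ : Subgroup SL(2, ℝ)) (m n : ℕ) (hmn : 1 ≤ m + n)
    (φ ψ : UpperHalfPlane → ℂ) (hφ : φ ∈ autOrder Γ m) (hψ : ψ ∈ autOrder Γ n) :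
    (fun z => φ z * ψ z) ∈ autOrder Γ (m + n - 1) := by
  exact mul_mem_autOrder Γ (m + n) m n rfl φ ψ hφ hψ
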